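/- For every integer l with 0 ≤ l ≤ k and every x ∈ {l+1,...,n}, one has l · r_l(x) = r_{l-1}(x-1) - r_{l-1}(x) (with r_{-1} := 0). -/

import Mathlib

/-!
For `l ≥ 1` write `r_l(x) = (x-l-1)!/x! · (1 - S_l(x) / (l·C(n,x)))` with
`S_l(x) = ∑_{j<l} (l-j) C(k,j) C(n-k,x-j)`. After clearing factorials and using
`(n-x+1) C(n,x-1) = x C(n,x)`, the recursion for `l ≥ 2` is the three-term identity
`l·S_{l+1}(x) = (n-x+1) S_l(x-1) - (x-l-1) S_l(x)`, which follows, after an index shift, from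
the absorption identity `(b-y+1) C(b,y-1) = y C(b,y)` applied to both binomials. For `l = 1`, Pascal's rule
telescopes the harmonic-type sum in `r_0`, and `C(n-x,k)/C(n,k) = C(n-k,x)/C(n,x)` finishes.
-/

open Finset

namespace Secretary

/-- Binomial coefficient on integers: zero when `b < 0` or `b > a`. -/
noncomputable def Cb (a b : ℤ) : ℝ :=
  if 0 ≤ b ∧ b ≤ a then (Nat.choose a.toNat b.toNat : ℝ) else 0

/-- The value `π(i)` of a permutation of `{1,...,n}` in 1-based indexing. -/
def pv (n : ℕ) (π : Equiv.Perm (Fin n)) (i : ℕ) : ℕ :=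
  if h : i - 1 < n then ((π ⟨i - 1, h⟩ : Fin n) : ℕ) + 1 else 0

/-- The relative rank `ρ_π(i)`: the number of `j ∈ {1,...,i}` with `π(j) ≤ π(i)`. -/
def rho (n : ℕ) (π : Equiv.Perm (Fin n)) (i : ℕ) : ℕ :=
  ((Finset.Icc 1 i).filter fun j => pv n π j ≤ pv n π i).card

/-- Extension of a sequence `s` with `s (k+1) = n - 1`. -/
def sExt (n k : ℕ) (s : ℕ → ℕ) (l : ℕ) : ℕ := if l = k + 1 then n - 1 else s l

/-- `i` is a `(π, l, w)`-element. -/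
def IsElem (n k : ℕ) (s : ℕ → ℕ) (π : Equiv.Perm (Fin n)) (l i : ℕ) : Prop :=
  sExt n k s l < i ∧ i ≤ sExt n k s (l + 1) ∧ rho n π i ≤ l

/-- `l` is a `w`-threshold of `π`. -/
def IsThreshold (n k : ℕ) (s : ℕ → ℕ) (π : Equiv.Perm (Fin n)) (l : ℕ) : Prop :=
  1 ≤ l ∧ l ≤ k ∧ ∃ i, IsElem n k s π l i

open Classical in
/-- `π` is a lucky permutation for the sequence `w = s`. -/
def Lucky (n k : ℕ) (s : ℕ → ℕ) (π : Equiv.Perm (Fin n)) : Prop :=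
  if ∃ l, IsThreshold n k s π l then
    pv n π (sInf {i | IsElem n k s π (sInf {l | IsThreshold n k s π l}) i}) ≤ k
  else pv n π n ≤ k

/-- The maps `r_l` (first argument an integer `l ≤ k`). -/
noncomputable def rr (n k : ℕ) (l : ℤ) (x : ℕ) : ℝ :=
  if l < 0 then 0
  else if l = 0 then
    1 / (x : ℝ) - (k : ℝ) / n - Cb ((n : ℤ) - x - 1) k / ((x : ℝ) * Cb n k)
      - (1 / Cb n k) * ∑ j ∈ Finset.Icc 1 x, Cb ((n : ℤ) - j - 1) ((k : ℤ) - 1) / (j : ℝ)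
  else
    ((Nat.factorial (x - l.toNat - 1) : ℝ) / (Nat.factorial x : ℝ)) *
      (1 - (1 / ((l : ℝ) * Cb n x)) *
        ∑ j ∈ Finset.range (l.toNat + 1),
          ((l : ℝ) - j) * Cb k j * Cb ((n : ℤ) - k) ((x : ℤ) - j))

/-- The constant `δ_{k,n}`. -/
noncomputable def delta (n k : ℕ) : ℝ :=
  if k = 1 then -(1 / (n : ℝ)) * ∑ j ∈ Finset.Icc 1 (n - 1), (1 : ℝ) / j
  else (Nat.factorial (n - k) : ℝ) / (Nat.factorial n : ℝ)

/-- The maps `d_l` for `0 ≤ l ≤ k`. -/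
noncomputable def d (n k : ℕ) (l x : ℕ) : ℝ :=
  if l = 0 then
    -1 + (k : ℝ) * x / n + Cb ((n : ℤ) - x - 1) k / Cb n k
      + ((x : ℝ) / Cb n k) * ∑ j ∈ Finset.Icc 1 x, Cb ((n : ℤ) - j - 1) ((k : ℤ) - 1) / (j : ℝ)
  else if l = 1 then
    -((k : ℝ) / n) - (1 / Cb n k) * ∑ j ∈ Finset.Icc 1 x, Cb ((n : ℤ) - j - 1) ((k : ℤ) - 1) / (j : ℝ)
  else
    ((k : ℝ) * (Nat.factorial x : ℝ) * (Nat.factorial (n - l - x) : ℝ) /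
        ((l : ℝ) * ((l : ℝ) - 1) * (Nat.factorial n : ℝ))) *
      ∑ j ∈ Finset.range (l - 1), Cb ((k : ℤ) - 1) j * Cb ((n : ℤ) - k) ((x : ℤ) + l - j - 1)

/-- The maps `c_l(x) = d_l(x - l)`. -/
noncomputable def c (n k l x : ℕ) : ℝ := d n k l (x - l)

/-- The constant `ξ_{k,n}`. -/
noncomputable def xi (n k : ℕ) : ℝ :=
  (k : ℝ) * (Nat.factorial (n - k - 1) : ℝ) / (Nat.factorial n : ℝ)

/-- `w` (given as a 1-indexed function) is a word in `X^{(k-l)}`, i.e. its `j`-th letter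
belongs to `X_{l+j} = {l+j, ..., n-1}` for `1 ≤ j ≤ k - l`. -/
def memX (n k l : ℕ) (w : ℕ → ℕ) : Prop :=
  ∀ j ∈ Finset.Icc 1 (k - l), l + j ≤ w j ∧ w j ≤ n - 1

/-- The left-shift operator removing the first `l` letters of a word. -/
def shift (l : ℕ) (w : ℕ → ℕ) : ℕ → ℕ := fun j => w (l + j)

/-- The maps `R_{l,j}`. -/
noncomputable def Rmap (n k l : ℕ) (w : ℕ → ℕ) (j : ℕ) : ℝ :=
  if 1 ≤ j ∧ j ≤ k - l then
    rr n k ((l : ℤ) + j - 1) (w j)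
      - rr n k ((l : ℤ) + j - 1) (if j = k - l then n - 1 else w (j + 1))
  else 0

/-- The maps `Γ_{l,j,j'}`. -/
noncomputable def Gam (n k l j j' : ℕ) (w : ℕ → ℕ) : ℝ :=
  if 1 ≤ j ∧ j ≤ j' ∧ j' ≤ k - l then
    ∏ t ∈ Finset.Icc j j', ((w t : ℝ) - l - t + 1)
  else 1

/-- The maps `T_l`. -/
noncomputable def Tmap (n k l : ℕ) (w : ℕ → ℕ) : ℝ :=
  (∑ j ∈ Finset.Icc 1 (k - l), Rmap n k l w j * Gam n k l 1 j w)
    + xi n k * Gam n k l 1 (k - l) w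

/-- The maps `D_l(w) = r_{l-1}(x_1) - T_l(w)`, with `x_1 := n-1` when `l = k`. -/
noncomputable def Dmap (n k l : ℕ) (w : ℕ → ℕ) : ℝ :=
  rr n k ((l : ℤ) - 1) (if l = k then n - 1 else w 1) - Tmap n k l w

/-- The maps `F_{l,w}(x) = -c_{l-1}(x) - x·D_l(w)`. -/
noncomputable def Fmap (n k l : ℕ) (w : ℕ → ℕ) (x : ℕ) : ℝ :=
  -(c n k (l - 1) x) - (x : ℝ) * Dmap n k l w

/-- The maps `a_l`. -/
noncomputable def amap (n k l x : ℕ) : ℝ :=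
  (1 / Cb n x) * ∑ j ∈ Finset.range (l + 1), Cb k j * Cb ((n : ℤ) - k) ((x : ℤ) - j)

/-- The maps `b_l`. -/
noncomputable def bmap (n k l x : ℕ) : ℝ :=
  (1 / ((l : ℝ) * Cb n x)) *
    ∑ j ∈ Finset.range (l + 1), (j : ℝ) * Cb k j * Cb ((n : ℤ) - k) ((x : ℤ) - j)

/-- `π ∈ S(l0, i0)`: `π` is lucky for `s`, `l0` is the smallest `s`-threshold of `π`,
and `i0` is the smallest `(π, l0, s)`-element. -/
def SMem (n k : ℕ) (s : ℕ → ℕ) (l0 i0 : ℕ) (π : Equiv.Perm (Fin n)) : Prop :=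
  Lucky n k s π ∧ IsLeast {l | IsThreshold n k s π l} l0 ∧
    IsLeast {i | IsElem n k s π l0 i} i0

/-- `π ∈ S(Y, Y', l0, i0)`. -/
def SYYMem (n k : ℕ) (s : ℕ → ℕ) (Y Y' : Finset ℕ) (l0 i0 : ℕ) (π : Equiv.Perm (Fin n)) :
    Prop :=
  SMem n k s l0 i0 π ∧ ((Finset.Icc 1 i0).image (pv n π)) ∩ Finset.Icc 1 k = Y ∧
    ((Finset.Icc 1 i0).image (pv n π)) ∩ Finset.Icc (k + 1) n = Y'

open Nat

lemma Cb_natCast (a b : ℕ) : Cb a b = a.choose b := by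
  unfold Cb
  split_ifs with h
  · simp
  · rw [Nat.choose_eq_zero_of_lt (by omega), Nat.cast_zero]

lemma Cb_of_neg {a b : ℤ} (hb : b < 0) : Cb a b = 0 :=
  if_neg fun h => by omega

lemma Cb_of_lt {a b : ℤ} (h : a < b) : Cb a b = 0 :=
  if_neg fun h' => by omega

lemma Cb_pos {a b : ℕ} (h : b ≤ a) : 0 < Cb a b := by
  rw [Cb_natCast]; exact_mod_cast Nat.choose_pos h

lemma Cb_absorb (a b : ℤ) : ((a : ℝ) - b + 1) * Cb a (b - 1) = b * Cb a b := by
  rcases le_or_gt b 0 with hb | hb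
  · rcases hb.lt_or_eq with hb | rfl
    · rw [Cb_of_neg (by omega), Cb_of_neg hb]; ring
    · rw [Cb_of_neg (by omega)]; simp
  rcases lt_or_ge a 0 with ha | ha
  · rw [Cb_of_lt (by omega), Cb_of_lt (by omega)]; ring
  lift a to ℕ using ha
  obtain ⟨t, rfl⟩ : ∃ t : ℕ, b = t + 1 := ⟨(b - 1).toNat, by omega⟩
  rw [add_sub_cancel_right, Cb_natCast, show (t : ℤ) + 1 = ((t + 1 : ℕ) : ℤ) by push_cast; ring,
    Cb_natCast]
  have h := Nat.choose_succ_right_eq a t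
  rcases le_or_gt t a with hta | hta
  · have : ((a.choose (t + 1) * (t + 1) : ℕ) : ℝ) = ((a.choose t * (a - t) : ℕ) : ℝ) := by rw [h]
    push_cast [hta] at this ⊢
    linarith
  · rw [Nat.choose_eq_zero_of_lt hta, Nat.choose_eq_zero_of_lt (by omega)]; simp

lemma Cb_add_Cb_sub_one (a b : ℤ) (hb : 0 < b) : Cb a b + Cb a (b - 1) = Cb (a + 1) b := by
  rcases lt_or_ge a 0 with ha | ha
  · rw [Cb_of_lt (by omega), Cb_of_lt (by omega), Cb_of_lt (by omega)]; ring
  lift a to ℕ using ha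
  obtain ⟨t, rfl⟩ : ∃ t : ℕ, b = t + 1 := ⟨(b - 1).toNat, by omega⟩
  rw [add_sub_cancel_right, show (t : ℤ) + 1 = ((t + 1 : ℕ) : ℤ) by push_cast; ring,
    show (a : ℤ) + 1 = ((a + 1 : ℕ) : ℤ) by push_cast; ring, Cb_natCast, Cb_natCast, Cb_natCast,
    Nat.choose_succ_succ']
  push_cast; ring

lemma choose_mul_choose_sub_comm (n k x : ℕ) :
    n.choose k * (n - k).choose x = n.choose x * (n - x).choose k := by
  calc n.choose k * (n - k).choose x = n.choose (k + x) * (k + x).choose k := by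
        rw [Nat.choose_mul (Nat.le_add_right k x), Nat.add_sub_cancel_left]
    _ = n.choose (x + k) * (x + k).choose x := by rw [add_comm, Nat.choose_symm_add]
    _ = n.choose x * (n - x).choose k := by
        rw [Nat.choose_mul (Nat.le_add_right x k), Nat.add_sub_cancel_left]

lemma Cb_div_Cb_comm {n x : ℕ} (k : ℕ) (hx : x ≤ n) :
    Cb ((n : ℤ) - k) x / Cb n x = Cb ((n : ℤ) - x) k / Cb n k := by
  rcases le_or_gt k n with hk | hk
  · rw [div_eq_div_iff (Cb_pos hx).ne' (Cb_pos hk).ne',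
      show (n : ℤ) - k = ((n - k : ℕ) : ℤ) by omega, show (n : ℤ) - x = ((n - x : ℕ) : ℤ) by omega,
      Cb_natCast, Cb_natCast, Cb_natCast, Cb_natCast]
    have h : ((n.choose k * (n - k).choose x : ℕ) : ℝ) =
        ((n.choose x * (n - x).choose k : ℕ) : ℝ) := by
      rw [choose_mul_choose_sub_comm]
    push_cast at h
    linarith
  · rw [Cb_of_lt (by omega), Cb_of_lt (by omega : (n : ℤ) - x < k), zero_div, zero_div]

/-- The sum in `r_l`, without its vanishing `j = l` term. -/
noncomputable def hypSum (a b : ℤ) (l : ℕ) (y : ℤ) : ℝ :=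
  ∑ j ∈ range l, ((l : ℝ) - j) * (Cb a j * Cb b (y - j))

lemma Cb_mul_Cb_sub_one (a b y : ℤ) (j : ℕ) :
    ((a : ℝ) + b - y + 1) * (Cb a j * Cb b (y - 1 - j)) =
      (y - j) * (Cb a j * Cb b (y - j)) + (j + 1) * (Cb a (j + 1) * Cb b (y - (j + 1))) := by
  have hb := Cb_absorb b (y - j)
  have ha := Cb_absorb a (j + 1)
  rw [add_sub_cancel_right] at ha
  rw [show y - 1 - j = y - j - 1 by ring, show y - (j + 1) = y - j - 1 by ring]
  push_cast at ha hb
  linear_combination Cb a j * hb + Cb b (y - j - 1) * ha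

lemma hypSum_succ (a b y : ℤ) (l : ℕ) :
    (l : ℝ) * hypSum a b (l + 1) y =
      ((a : ℝ) + b - y + 1) * hypSum a b l (y - 1) - (y - l - 1) * hypSum a b l y := by
  set c : ℕ → ℝ := fun j => Cb a j * Cb b (y - j) with hc
  have hlast : ∀ f : ℕ → ℝ, ∑ j ∈ range l, ((l : ℝ) - j) * f j =
      ∑ j ∈ range (l + 1), ((l : ℝ) - j) * f j := by
    intro f; rw [sum_range_succ]; simp
  have hshift : ∑ j ∈ range l, ((l : ℝ) - j) * ((j + 1) * c (j + 1)) =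
      ∑ j ∈ range (l + 1), (((l : ℝ) + 1 - j) * j) * c j := by
    rw [sum_range_succ']; push_cast; simp only [mul_zero, zero_mul, add_zero]
    exact sum_congr rfl fun j _ => by ring
  have hprev : ((a : ℝ) + b - y + 1) * hypSum a b l (y - 1) =
      ∑ j ∈ range l, ((l : ℝ) - j) * ((y - j) * c j) +
        ∑ j ∈ range l, ((l : ℝ) - j) * ((j + 1) * c (j + 1)) := by
    rw [hypSum, mul_sum, ← sum_add_distrib]
    refine sum_congr rfl fun j _ => ?_
    have := Cb_mul_Cb_sub_one a b y j
    simp only [hc]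
    push_cast at this ⊢
    linear_combination ((l : ℝ) - j) * this
  rw [hprev, hshift, hlast, hypSum, hypSum, hlast, mul_sum, mul_sum, ← sum_add_distrib,
    ← sum_sub_distrib]
  refine sum_congr rfl fun j _ => ?_
  simp only [hc]; push_cast; ring

lemma rr_of_pos (n k : ℕ) {l : ℕ} (x : ℕ) (hl : 0 < l) :
    rr n k l x = (x - l - 1)! / x ! * (1 - hypSum k (n - k) l x / (l * Cb n x)) := by
  rw [rr, if_neg (by omega), if_neg (by omega), Int.toNat_natCast, hypSum, sum_range_succ]
  simp only [Int.cast_natCast, sub_self, zero_mul, add_zero, mul_assoc]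
  ring

lemma rr_zero_sub_rr_zero (n k : ℕ) {x : ℕ} (hk : 0 < k) (hx : 2 ≤ x) :
    rr n k 0 (x - 1) - rr n k 0 x = (1 - Cb ((n : ℤ) - x) k / Cb n k) / (x * (x - 1)) := by
  obtain ⟨y, rfl⟩ : ∃ y, x = y + 1 := ⟨x - 1, by omega⟩
  have hy : (y : ℝ) ≠ 0 := Nat.cast_ne_zero.mpr (by omega)
  have hinv : 1 / (y : ℝ) - 1 / (y + 1) = 1 / ((y + 1) * y) := by field_simp; ring
  have hpascal := Cb_add_Cb_sub_one ((n : ℤ) - y - 2) k (by omega)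
  simp only [rr, lt_irrefl, if_false, if_true, Nat.add_sub_cancel,
    sum_Icc_succ_top (show 1 ≤ y + 1 by omega)]
  push_cast at hpascal ⊢
  rw [show (n : ℤ) - y - 2 + 1 = n - y - 1 by ring] at hpascal
  rw [show (n : ℤ) - (y + 1) - 1 = n - y - 2 by ring,
    show (n : ℤ) - (y + 1) = n - y - 1 by ring, add_sub_cancel_right]
  simp only [← div_div] at hinv ⊢
  linear_combination (1 - Cb (n - y - 1) k / Cb n k) * hinv + 1 / (y + 1) / Cb n k * hpascal

lemma rr_one (n k : ℕ) {x : ℕ} (hx : 2 ≤ x) :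
    rr n k 1 x = (1 - Cb ((n : ℤ) - k) x / Cb n x) / (x * (x - 1)) := by
  obtain ⟨y, rfl⟩ : ∃ y, x = y + 2 := ⟨x - 2, by omega⟩
  rw [show ((1 : ℤ)) = ((1 : ℕ) : ℤ) from rfl, rr_of_pos n k _ one_pos, hypSum]
  simp only [Nat.add_one_sub_one, add_tsub_cancel_right, factorial_succ, cast_mul, cast_add,
    cast_one, range_one, Cb_natCast, cast_ofNat, sum_singleton, CharP.cast_eq_zero, sub_zero,
    choose_zero_right, one_mul]
  rw [show (y : ℝ) + 2 - 1 = y + 1 by ring]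
  field_simp
  ring

lemma rr_one_eq_sub (n k : ℕ) {x : ℕ} (hk : 0 < k) (hx : 2 ≤ x) (hxn : x ≤ n) :
    rr n k 1 x = rr n k 0 (x - 1) - rr n k 0 x := by
  rw [rr_zero_sub_rr_zero n k hk hx, rr_one n k hx, Cb_div_Cb_comm k hxn]

lemma rr_succ_eq_sub (n k : ℕ) {l x : ℕ} (hl : 0 < l) (hx : l + 2 ≤ x) (hxn : x ≤ n) :
    ((l + 1 : ℕ) : ℝ) * rr n k (l + 1 : ℕ) x = rr n k l (x - 1) - rr n k l x := by
  obtain ⟨y, rfl⟩ : ∃ y, x = y + l + 2 := ⟨x - l - 2, by omega⟩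
  have hsum := hypSum_succ k ((n : ℤ) - k) (y + l + 2 : ℕ) l
  have habs := Cb_absorb n (y + l + 2 : ℕ)
  have hC : Cb n (y + l + 2 : ℕ) ≠ 0 := (Cb_pos hxn).ne'
  have hnx : (n : ℝ) - (y + l + 2 : ℕ) + 1 ≠ 0 := by
    have : ((y + l + 2 : ℕ) : ℝ) ≤ n := by exact_mod_cast hxn
    linarith
  rw [rr_of_pos n k _ (by omega : 0 < l + 1), rr_of_pos n k _ hl, rr_of_pos n k _ hl,
    show y + l + 2 - (l + 1) - 1 = y by omega, show y + l + 2 - 1 - l - 1 = y by omega,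
    show y + l + 2 - l - 1 = y + 1 by omega, show y + l + 2 - 1 = y + l + 1 by omega,
    show (y + l + 2) ! = (y + l + 2) * (y + l + 1) ! from rfl, Nat.factorial_succ y,
    show (((y + l + 1 : ℕ) : ℤ)) = ((y + l + 2 : ℕ) : ℤ) - 1 by push_cast; ring]
  push_cast at hsum habs hnx hC ⊢
  have hl' : (l : ℝ) ≠ 0 := Nat.cast_ne_zero.mpr hl.ne'
  rw [eq_div_of_mul_eq hnx ((mul_comm _ _).trans habs),
    eq_div_of_mul_eq hl' ((mul_comm _ _).trans hsum)]
  field_simp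
  ring

theorem r_rec_general (n k : ℕ) :
    ∀ l : ℕ, l ≤ k → ∀ x ∈ Finset.Icc (l + 1) n,
      (l : ℝ) * rr n k (l : ℤ) x =
        rr n k ((l : ℤ) - 1) (x - 1) - rr n k ((l : ℤ) - 1) x := by
  intro l hlk x hx
  obtain ⟨hlx, hxn⟩ := Finset.mem_Icc.mp hx
  rcases l with _ | _ | l
  · simp [rr]
  · simpa using rr_one_eq_sub n k (by omega) hlx hxn
  · have := rr_succ_eq_sub n k (l := l + 1) (by omega) hlx hxn
    rw [show ((l + 1 + 1 : ℕ) : ℤ) - 1 = ((l + 1 : ℕ) : ℤ) by push_cast; ring]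
    exact this

theorem r_rec (n k : ℕ) (hk : 1 ≤ k) (hkn : k < n) :
    ∀ l : ℕ, l ≤ k → ∀ x ∈ Finset.Icc (l + 1) n,
      (l : ℝ) * rr n k (l : ℤ) x =
        rr n k ((l : ℤ) - 1) (x - 1) - rr n k ((l : ℤ) - 1) x :=
  r_rec_general n k
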